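/- Let N ≥ 1 and let λ = (λ_1, …, λ_m) be a partition with all parts positive. Then the differential operator representing Tr(a†a²), namely D₁₂ : f ↦ Σ_{i,j,k=1}^N x_{ij} ∂²f/(∂x_{kj} ∂x_{ik}), acts on the multi-trace polynomial p_λ by D₁₂ p_λ = Σ_{j=1}^m λ_j Σ_{s=1}^{λ_j−1} p_{λ_j−s} · p_{s−1} · p_{λ ∖ λ_j} + 2 Σ_{1 ≤ j < l ≤ m} λ_j λ_l · p_{λ_j+λ_l−1} · p_{λ ∖ {λ_j, λ_l}}, where λ ∖ λ_j means λ with the part λ_j deleted, and the factor p_0 = N appears in the s = 1 terms. -/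

import Mathlib

/-!
`D₁₂` is a second-order operator: `D₁₂ (f g) = D₁₂ f · g + f · D₁₂ g + B f g`, where `B f` is a
derivation. Expanding the product `p_λ` with this rule leaves `D₁₂ p_n` and `B p_n p_m` to compute.
Both follow from `∂_{ab} Tr X^{n+1} = (n+1) (X^n)_{ba}` together with the Leibniz rule
`∂ (X^{k+1}) = Σ_{r+s=k} X^r (∂X) X^s`: in `D₁₂ p_n` the second derivative cuts `X^{n-2}` into
`X^r ⊗ X^s`, and contracting with `x_{ij}` gives `Tr X^r · Tr X^{s+1}`; in `B p_n p_m` the two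
first derivatives are glued by `x_{ij}` into `Tr X^{n+m-1}`, once from each term of `B`.
-/

open MvPolynomial

/-- The matrix of indeterminates `X`, with entries `x_{ij}` in the polynomial ring
`ℝ[x_{ij} : 1 ≤ i,j ≤ N]`. -/
noncomputable def Xmat (N : ℕ) : Matrix (Fin N) (Fin N) (MvPolynomial (Fin N × Fin N) ℝ) :=
  fun i j => MvPolynomial.X (i, j)

/-- The trace power `p_k = Tr(X^k)`; in particular `p_0 = N`. -/
noncomputable def trPow (N : ℕ) (k : ℕ) : MvPolynomial (Fin N × Fin N) ℝ :=
  Matrix.trace (Xmat N ^ k)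

/-- The multi-trace polynomial `p_λ = p_{λ_1} ⋯ p_{λ_m}` attached to a partition
`λ = (λ_1, …, λ_m)` (given as a list of parts). -/
noncomputable def multiTrace (N : ℕ) (lam : List ℕ) : MvPolynomial (Fin N × Fin N) ℝ :=
  (lam.map (trPow N)).prod

/-- The differential operator representing `Tr(a† a²)`:
`D₁₂ f = Σ_{i,j,k} x_{ij} ∂²f/(∂x_{kj} ∂x_{ik})`. -/
noncomputable def D12 (N : ℕ) (f : MvPolynomial (Fin N × Fin N) ℝ) :
    MvPolynomial (Fin N × Fin N) ℝ :=
  ∑ i : Fin N, ∑ j : Fin N, ∑ k : Fin N,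
    MvPolynomial.X (i, j) * pderiv (k, j) (pderiv (i, k) f)

open Finset

theorem Finset.sum_sum_sum_sum_comm {α β γ δ M : Type*} [AddCommMonoid M] (a : Finset α)
    (b : Finset β) (c : Finset γ) (d : Finset δ) (f : α → β → γ → δ → M) :
    ∑ x ∈ a, ∑ y ∈ b, ∑ z ∈ c, ∑ w ∈ d, f x y z w =
      ∑ w ∈ d, ∑ x ∈ a, ∑ y ∈ b, ∑ z ∈ c, f x y z w :=
  calc _ = ∑ x ∈ a, ∑ y ∈ b, ∑ w ∈ d, ∑ z ∈ c, f x y z w :=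
        sum_congr rfl fun _ _ => sum_congr rfl fun _ _ => sum_comm
    _ = ∑ x ∈ a, ∑ w ∈ d, ∑ y ∈ b, ∑ z ∈ c, f x y z w :=
        sum_congr rfl fun _ _ => sum_comm
    _ = _ := sum_comm

section Derivation

variable {R A M ι : Type*} [CommSemiring R] [CommSemiring A] [Algebra R A]
  [AddCommMonoid M] [Module A M] [Module R M]

theorem Derivation.sum_apply (s : Finset ι) (D : ι → Derivation R A M) (a : A) :
    (∑ i ∈ s, D i) a = ∑ i ∈ s, D i a := by
  rw [← Derivation.coeFnAddMonoidHom_apply, map_sum, Finset.sum_apply]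
  rfl

theorem Derivation.leibniz_list_prod_map (D : Derivation R A M) (f : ι → A) (l : List ι) :
    D (l.map f).prod = ∑ t : Fin l.length, ((l.eraseIdx t).map f).prod • D (f l[t]) := by
  induction l with
  | nil => simp
  | cons a l ih =>
    rw [List.map_cons, List.prod_cons, Derivation.leibniz, ih, smul_sum]
    simp [Fin.sum_univ_succ, mul_smul, add_comm]

end Derivation

section SecondOrder

variable {R A ι : Type*} [CommSemiring R] [CommRing A] [Algebra R A]

theorem secondOrder_leibniz_list_prod_map (D : A → A) (B : A → Derivation R A A)
    (hD : ∀ f g, D (f * g) = D f * g + f * D g + B f g) (f : ι → A) (l : List ι) :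
    D (l.map f).prod = ∑ j : Fin l.length, D (f l[j]) * ((l.eraseIdx j).map f).prod
      + ∑ j : Fin l.length, ∑ k : Fin l.length,
          if (j : ℕ) < k then B (f l[j]) (f l[k]) * (((l.eraseIdx k).eraseIdx j).map f).prod
          else 0 := by
  induction l with
  | nil =>
    have h := hD 1 1
    simp only [mul_one, one_mul, Derivation.map_one_eq_zero, add_zero, left_eq_add] at h
    simpa using h
  | cons a l ih =>
    rw [List.map_cons, List.prod_cons, hD, ih, (B (f a)).leibniz_list_prod_map]
    simp only [List.length_cons, Fin.sum_univ_succ, Fin.val_zero, Fin.val_succ, Fin.getElem_fin,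
      List.getElem_cons_zero, List.getElem_cons_succ, List.eraseIdx_cons_zero,
      List.eraseIdx_cons_succ, List.map_cons, List.prod_cons, smul_eq_mul, Nat.not_lt_zero,
      Nat.zero_lt_succ, Nat.succ_lt_succ_iff, if_true, if_false, zero_add, mul_add, mul_sum,
      mul_ite, mul_zero]
    simp only [mul_left_comm (f a), mul_comm _ ((B _) _)]
    abel

end SecondOrder

namespace Matrix

section TripleSums

variable {R n : Type*} [CommSemiring R] [Fintype n] (Y A B : Matrix n n R)

theorem sum_mul_apply_mul_diag :
    ∑ i, ∑ j, ∑ k, Y i j * (A k k * B j i) = (Y * B).trace * A.trace := by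
  simp only [trace, diag, mul_apply, sum_mul]
  simp only [mul_sum]
  exact sum_congr rfl fun _ _ => sum_congr rfl fun _ _ => sum_congr rfl fun _ _ => by ring

theorem sum_mul_apply_mul_apply :
    ∑ i, ∑ j, ∑ k, Y i j * (A k i * B j k) = (Y * B * A).trace := by
  simp only [trace, diag, mul_apply, sum_mul]
  refine sum_congr rfl fun i _ => ?_
  rw [sum_comm]
  exact sum_congr rfl fun _ _ => sum_congr rfl fun _ _ => by ring

end TripleSums

section Derivation

variable {R A : Type*} [CommSemiring R] [CommSemiring A] [Algebra R A] (d : Derivation R A A)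

theorem map_derivation_mul {l m n : Type*} [Fintype m] (M : Matrix l m A) (P : Matrix m n A) :
    (M * P).map d = M.map d * P + M * P.map d := by
  ext i j
  simp only [map_apply, mul_apply, map_sum, Derivation.leibniz, smul_eq_mul, add_apply,
    ← sum_add_distrib]
  exact sum_congr rfl fun _ _ => by ring

variable {n : Type*} [Fintype n] [DecidableEq n]

theorem map_derivation_pow_succ (M : Matrix n n A) (k : ℕ) :
    (M ^ (k + 1)).map d = ∑ p ∈ antidiagonal k, M ^ p.1 * M.map d * M ^ p.2 := by
  induction k with
  | zero => simp
  | succ k ih =>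
    rw [pow_succ, map_derivation_mul, ih, Nat.sum_antidiagonal_succ', sum_mul, add_comm]
    simp [pow_succ, Matrix.mul_assoc]

theorem derivation_trace_pow_succ (M : Matrix n n A) (k : ℕ) :
    d (M ^ (k + 1)).trace = (k + 1) • (M ^ k * M.map d).trace := by
  rw [AddMonoidHom.map_trace, map_derivation_pow_succ, trace_sum]
  have cyclic : ∀ p ∈ antidiagonal k,
      (M ^ p.1 * M.map d * M ^ p.2).trace = (M ^ k * M.map d).trace := by
    rintro ⟨r, s⟩ h
    rw [trace_mul_comm, ← Matrix.mul_assoc, ← pow_add, add_comm, mem_antidiagonal.mp h]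
  rw [sum_congr rfl cyclic, sum_const, Nat.card_antidiagonal]

end Derivation

end Matrix

section MultiTrace

variable {N : ℕ}

theorem map_pderiv_Xmat (a b : Fin N) : (Xmat N).map (pderiv (a, b)) = Matrix.single a b 1 := by
  ext p q
  simp [Xmat, pderiv_X, Pi.single_apply, Matrix.single_apply, Prod.ext_iff, eq_comm]

theorem pderiv_trPow_succ (k : ℕ) (a b : Fin N) :
    pderiv (a, b) (trPow N (k + 1)) = (k + 1) • (Xmat N ^ k) b a := by
  rw [trPow, Matrix.derivation_trace_pow_succ, map_pderiv_Xmat, Matrix.trace_mul_single]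
  simp

theorem pderiv_Xmat_pow_succ_apply (k : ℕ) (a b p q : Fin N) :
    pderiv (a, b) ((Xmat N ^ (k + 1)) p q) =
      ∑ r ∈ antidiagonal k, (Xmat N ^ r.1) p a * (Xmat N ^ r.2) b q := by
  rw [← Matrix.map_apply (f := pderiv (a, b)), Matrix.map_derivation_pow_succ, map_pderiv_Xmat,
    Matrix.sum_apply]
  refine sum_congr rfl fun r _ => ?_
  simp [Matrix.mul_apply, Matrix.single_apply, ite_and, sum_ite_eq]

theorem trace_Xmat_mul_pow (k : ℕ) : (Xmat N * Xmat N ^ k).trace = trPow N (k + 1) := by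
  rw [← pow_succ']; rfl

theorem pderiv_trPow_zero (v : Fin N × Fin N) : pderiv v (trPow N 0) = 0 := by
  simp [trPow]

theorem D12_trPow_add_two (m : ℕ) :
    D12 N (trPow N (m + 2)) =
      (m + 2) • ∑ r ∈ antidiagonal m, trPow N (r.2 + 1) * trPow N r.1 := by
  have second : ∀ i j k : Fin N, pderiv (k, j) (pderiv (i, k) (trPow N (m + 2))) =
      (m + 2) • ∑ r ∈ antidiagonal m, (Xmat N ^ r.1) k k * (Xmat N ^ r.2) j i := by
    intro i j k
    rw [pderiv_trPow_succ (m + 1), map_nsmul, pderiv_Xmat_pow_succ_apply]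
  simp only [D12, second, mul_smul_comm, mul_sum, ← smul_sum]
  rw [Finset.sum_sum_sum_sum_comm]
  congr 1
  refine sum_congr rfl fun r _ => ?_
  rw [← trace_Xmat_mul_pow]
  exact Matrix.sum_mul_apply_mul_diag (Xmat N) _ _

theorem D12_trPow (n : ℕ) :
    D12 N (trPow N n) = (n : MvPolynomial (Fin N × Fin N) ℝ) *
      ∑ s ∈ Icc 1 (n - 1), trPow N (n - s) * trPow N (s - 1) := by
  match n with
  | 0 => simp [D12, pderiv_trPow_zero]
  | 1 => simp [D12, pderiv_trPow_succ 0, Matrix.one_apply, apply_ite]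
  | m + 2 =>
    rw [D12_trPow_add_two, nsmul_eq_mul, Nat.sum_antidiagonal_eq_sum_range_succ_mk,
      ← Finset.Ico_add_one_right_eq_Icc, sum_Ico_eq_sum_range]
    congr 1
    refine sum_congr (by simp) fun k hk => ?_
    have hkm : k ≤ m := Nat.lt_succ_iff.mp (mem_range.mp hk)
    rw [show m + 2 - (1 + k) = m - k + 1 by omega, Nat.add_sub_cancel_left]

noncomputable def D12Cross (N : ℕ) (f : MvPolynomial (Fin N × Fin N) ℝ) :
    Derivation ℝ (MvPolynomial (Fin N × Fin N) ℝ) (MvPolynomial (Fin N × Fin N) ℝ) :=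
  ∑ i, ∑ j, ∑ k, ((X (i, j) * pderiv (i, k) f) • pderiv (k, j) +
    (X (i, j) * pderiv (k, j) f) • pderiv (i, k))

theorem D12Cross_apply (f g : MvPolynomial (Fin N × Fin N) ℝ) :
    D12Cross N f g = ∑ i, ∑ j, ∑ k,
      X (i, j) * (pderiv (i, k) f * pderiv (k, j) g + pderiv (k, j) f * pderiv (i, k) g) := by
  simp only [D12Cross, Derivation.sum_apply, Derivation.add_apply, Derivation.smul_apply,
    smul_eq_mul]
  exact sum_congr rfl fun _ _ => sum_congr rfl fun _ _ => sum_congr rfl fun _ _ => by ring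

theorem D12_mul (f g : MvPolynomial (Fin N × Fin N) ℝ) :
    D12 N (f * g) = D12 N f * g + f * D12 N g + D12Cross N f g := by
  simp only [D12, D12Cross_apply, Derivation.leibniz, map_add, smul_eq_mul, sum_mul, mul_sum,
    ← sum_add_distrib]
  exact sum_congr rfl fun _ _ => sum_congr rfl fun _ _ => sum_congr rfl fun _ _ => by ring

theorem D12Cross_trPow (n m : ℕ) :
    D12Cross N (trPow N n) (trPow N m) =
      2 * (n : MvPolynomial (Fin N × Fin N) ℝ) * m * trPow N (n + m - 1) := by
  match n, m with
  | 0, m => simp [D12Cross_apply, pderiv_trPow_zero]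
  | n + 1, 0 => simp [D12Cross_apply, pderiv_trPow_zero]
  | a + 1, b + 1 =>
    have expand : ∀ i j k : Fin N, X (i, j) *
        ((a + 1) • (Xmat N ^ a) k i * (b + 1) • (Xmat N ^ b) j k +
          (a + 1) • (Xmat N ^ a) j k * (b + 1) • (Xmat N ^ b) k i) =
        ((a + 1) * (b + 1)) • (Xmat N i j * ((Xmat N ^ a) k i * (Xmat N ^ b) j k) +
          Xmat N i j * ((Xmat N ^ b) k i * (Xmat N ^ a) j k)) := by
      intro i j k
      simp only [nsmul_eq_mul, Xmat]
      push_cast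
      ring
    rw [D12Cross_apply]
    simp only [pderiv_trPow_succ, expand, ← smul_sum, sum_add_distrib,
      Matrix.sum_mul_apply_mul_apply, Matrix.mul_assoc, ← pow_add, trace_Xmat_mul_pow]
    rw [show a + 1 + (b + 1) - 1 = a + b + 1 by omega, add_comm b a, nsmul_eq_mul]
    push_cast
    ring

end MultiTrace

theorem trace_adag_a2_on_multiTrace_general (N : ℕ) (lam : List ℕ) :
    D12 N (multiTrace N lam) =
      (∑ j : Fin lam.length,
        (lam.get j : MvPolynomial (Fin N × Fin N) ℝ) *
          ∑ s ∈ Finset.Icc 1 (lam.get j - 1),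
            trPow N (lam.get j - s) * trPow N (s - 1) * multiTrace N (lam.eraseIdx j))
      + 2 * ∑ j : Fin lam.length, ∑ l : Fin lam.length,
          if (j : ℕ) < (l : ℕ) then
            (lam.get j : MvPolynomial (Fin N × Fin N) ℝ) * (lam.get l) *
              trPow N (lam.get j + lam.get l - 1) *
              multiTrace N ((lam.eraseIdx l).eraseIdx j)
          else 0 := by
  unfold multiTrace
  rw [secondOrder_leibniz_list_prod_map (D12 N) (D12Cross N) D12_mul]
  simp only [D12_trPow, D12Cross_trPow, List.get_eq_getElem, Fin.getElem_fin]
  simp only [mul_sum, sum_mul, mul_ite, mul_zero, mul_assoc]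

/-- Theorem 1(iii) of the paper (unnormalized form): for a partition `λ` with all parts
positive,
`D₁₂ p_λ = Σ_j λ_j Σ_{s=1}^{λ_j−1} p_{λ_j−s} p_{s−1} p_{λ∖λ_j}
  + 2 Σ_{j<l} λ_j λ_l p_{λ_j+λ_l−1} p_{λ∖{λ_j,λ_l}}`,
where `λ ∖ λ_j` deletes the part `λ_j`, and the factor `p_0 = N` appears in the
`s = 1` terms. -/
theorem trace_adag_a2_on_multiTrace (N : ℕ) (hN : 1 ≤ N) (lam : List ℕ)
    (hsort : lam.Pairwise (· ≥ ·)) (hpos : ∀ p ∈ lam, 0 < p) :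
    D12 N (multiTrace N lam) =
      (∑ j : Fin lam.length,
        (lam.get j : MvPolynomial (Fin N × Fin N) ℝ) *
          ∑ s ∈ Finset.Icc 1 (lam.get j - 1),
            trPow N (lam.get j - s) * trPow N (s - 1) * multiTrace N (lam.eraseIdx j))
      + 2 * ∑ j : Fin lam.length, ∑ l : Fin lam.length,
          if (j : ℕ) < (l : ℕ) then
            (lam.get j : MvPolynomial (Fin N × Fin N) ℝ) * (lam.get l) *
              trPow N (lam.get j + lam.get l - 1) *
              multiTrace N ((lam.eraseIdx l).eraseIdx j)
          else 0 :=
  trace_adag_a2_on_multiTrace_general N lam
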